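/- arXiv:2110.08072 — 2 statements merged into one kernel-verified Lean document; each statement's English description precedes it below -/
import Mathlib

section
/- Let F be a real Banach space, let μ be a Borel probability measure on F, and let q : F → ℝ^d be continuously Fréchet differentiable with ∫ ‖q(g)‖² dμ(g) < ∞. Assume that at every f ∈ F the Fréchet derivative Dq(f) : F → ℝ^d is surjective. Define the Bayes risk r(f) = ∫ ‖q(f) − q(g)‖² dμ(g) (Euclidean norm on ℝ^d). Then any f₀ ∈ F that minimises r over F satisfies q(f₀) = ∫ q(g) dμ(g) (Bochner integral in ℝ^d); that is, the quantity of interest at a Bayes act equals the posterior mean of the quantity of interest. -/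
open MeasureTheory

set_option maxHeartbeats 1000000

/-- In a real Banach space `F` with a Borel probability measure `μ`,
if `q : F → ℝ^d` is continuously Fréchet differentiable, square-integrable w.r.t. `μ`,
and has surjective derivative everywhere, then any minimiser `f₀` of the Bayes risk
`r f = ∫ ‖q f - q g‖² dμ(g)` satisfies `q f₀ = ∫ q dμ`. -/
theorem bayes_act_is_posterior_mean
    {F : Type*} [NormedAddCommGroup F] [NormedSpace ℝ F] [CompleteSpace F]
    [MeasurableSpace F] [BorelSpace F]
    {d : ℕ} (μ : Measure F) [IsProbabilityMeasure μ]
    (q : F → EuclideanSpace ℝ (Fin d))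
    (q' : F → F →L[ℝ] EuclideanSpace ℝ (Fin d))
    (hdiff : ∀ f : F, HasFDerivAt q (q' f) f)
    (hcont : Continuous q')
    (hsurj : ∀ f : F, Function.Surjective (q' f))
    (hint : Integrable (fun g => ‖q g‖ ^ 2) μ)
    (r : F → ℝ) (hr : ∀ f : F, r f = ∫ g, ‖q f - q g‖ ^ 2 ∂μ)
    (f₀ : F) (hmin : ∀ f : F, r f₀ ≤ r f) :
    q f₀ = ∫ g, q g ∂μ := by
  have hq_cont : Continuous q := by
    rw [continuous_iff_continuousAt]
    exact fun f => (hdiff f).continuousAt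
  have hmem : MemLp q 2 μ :=
    (memLp_two_iff_integrable_sq_norm hq_cont.aestronglyMeasurable).mpr hint
  have hq_int : Integrable q μ := hmem.integrable (by norm_num)
  set m : EuclideanSpace ℝ (Fin d) := ∫ g, q g ∂μ with hm
  -- integrabilities
  have h1 : Integrable (fun g => m - q g) μ := (integrable_const m).sub hq_int
  have h2 : Integrable (fun g => ‖m - q g‖ ^ 2) μ :=
    (memLp_two_iff_integrable_sq_norm h1.aestronglyMeasurable).mp
      ((memLp_const m).sub hmem)
  have hzero : (∫ g, (m - q g) ∂μ) = 0 := by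
    rw [integral_sub (integrable_const m) hq_int, integral_const, probReal_univ, one_smul, ← hm, sub_self]
  -- the key identity
  have key : ∀ y : EuclideanSpace ℝ (Fin d),
      ∫ g, ‖y - q g‖ ^ 2 ∂μ = ‖y - m‖ ^ 2 + ∫ g, ‖m - q g‖ ^ 2 ∂μ := by
    intro y
    have h3 : Integrable (fun g => 2 * (inner ℝ (y - m) (m - q g) : ℝ)) μ :=
      (h1.const_inner (y - m)).const_mul 2
    have expand : ∀ g : F,
        ‖y - q g‖ ^ 2 = ‖y - m‖ ^ 2 + (2 * (inner ℝ (y - m) (m - q g) : ℝ)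
          + ‖m - q g‖ ^ 2) := by
      intro g
      have : y - q g = (y - m) + (m - q g) := by abel
      rw [this, norm_add_sq_real]
      ring
    calc ∫ g, ‖y - q g‖ ^ 2 ∂μ
        = ∫ g, (‖y - m‖ ^ 2 + (2 * (inner ℝ (y - m) (m - q g) : ℝ)
            + ‖m - q g‖ ^ 2)) ∂μ := by
          exact integral_congr_ae (Filter.Eventually.of_forall expand)
      _ = ‖y - m‖ ^ 2 + ∫ g, (2 * (inner ℝ (y - m) (m - q g) : ℝ)
            + ‖m - q g‖ ^ 2) ∂μ := by
          have h32 : Integrable (fun g => 2 * (inner ℝ (y - m) (m - q g) : ℝ)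
              + ‖m - q g‖ ^ 2) μ := h3.add h2
          rw [integral_add (integrable_const _) h32, integral_const,
            probReal_univ, smul_eq_mul, one_mul]
      _ = ‖y - m‖ ^ 2 + ∫ g, ‖m - q g‖ ^ 2 ∂μ := by
          rw [integral_add h3 h2, integral_const_mul, integral_inner h1, hzero,
            inner_zero_right, mul_zero, zero_add]
  -- reduce the minimality to a statement about norms
  have hmin' : ∀ f : F, ‖q f₀ - m‖ ^ 2 ≤ ‖q f - m‖ ^ 2 := by
    intro f
    have := hmin f
    rw [hr, hr, key (q f₀), key (q f)] at this
    linarith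
  -- local surjectivity of q near f₀
  have hstrict : HasStrictFDerivAt q (q' f₀) f₀ :=
    hasStrictFDerivAt_of_hasFDerivAt_of_continuousAt
      (Filter.Eventually.of_forall fun y => hdiff y) hcont.continuousAt
  have hmap : Filter.map q (nhds f₀) = nhds (q f₀) :=
    hstrict.map_nhds_eq_of_surj (LinearMap.range_eq_top.mpr (hsurj f₀))
  have hrange : Set.range q ∈ nhds (q f₀) := by
    rw [← hmap, Filter.mem_map]
    simpa using Filter.univ_mem
  obtain ⟨ε, εpos, hball⟩ := Metric.mem_nhds_iff.mp hrange
  -- conclude by contradiction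
  by_contra hne
  have hv : (0 : ℝ) < ‖q f₀ - m‖ := by
    rw [norm_pos_iff, sub_ne_zero]
    exact hne
  set c : ℝ := min 1 (ε / (2 * ‖q f₀ - m‖)) with hc
  have hc0 : 0 < c := lt_min one_pos (by positivity)
  have hc1 : c ≤ 1 := min_le_left _ _
  set y : EuclideanSpace ℝ (Fin d) := q f₀ + c • (m - q f₀) with hy
  have hyball : y ∈ Metric.ball (q f₀) ε := by
    rw [Metric.mem_ball, dist_eq_norm]
    have : y - q f₀ = c • (m - q f₀) := by rw [hy]; abel
    rw [this, norm_smul, Real.norm_eq_abs, abs_of_pos hc0, norm_sub_rev]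
    calc c * ‖q f₀ - m‖ ≤ (ε / (2 * ‖q f₀ - m‖)) * ‖q f₀ - m‖ := by
          apply mul_le_mul_of_nonneg_right (min_le_right _ _) (norm_nonneg _)
      _ = ε / 2 := by field_simp
      _ < ε := by linarith
  obtain ⟨f, hf⟩ := hball hyball
  have hym : y - m = (1 - c) • (q f₀ - m) := by
    rw [hy]
    module
  have hlt : ‖y - m‖ ^ 2 < ‖q f₀ - m‖ ^ 2 := by
    rw [hym, norm_smul, Real.norm_eq_abs, abs_of_nonneg (by linarith), mul_pow]
    have hV : 0 < ‖q f₀ - m‖ ^ 2 := by positivity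
    nlinarith [mul_pos (mul_pos hc0 (by linarith : (0:ℝ) < 2 - c)) hV]
  have := hmin' f
  rw [hf] at this
  linarith
end

section
/- Let F be a real Banach space, let μ be a Borel probability measure on F, and let q : F → ℝ^d be continuously Fréchet differentiable with ∫ ‖q(g)‖² dμ(g) < ∞ and with Dq(f) : F → ℝ^d surjective at every f ∈ F. Define r(f) = ∫ ‖q(f) − q(g)‖² dμ(g). If f₀ ∈ F minimises r over F, then the minimal Bayes risk equals half the expected squared distance between two independent draws from μ: r(f₀) = (1/2) ∫∫ ‖q(g) − q(g′)‖² dμ(g) dμ(g′). -/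
open MeasureTheory

/-- Under the same hypotheses as the Bayes-act proposition, the minimal
Bayes risk equals half the expected squared distance between two independent draws:
`r f₀ = (1/2) ∫∫ ‖q g - q g'‖² dμ(g) dμ(g')`. -/
theorem min_bayes_risk_eq_half_double_integral
    {F : Type*} [NormedAddCommGroup F] [NormedSpace ℝ F] [CompleteSpace F]
    [MeasurableSpace F] [BorelSpace F]
    {d : ℕ} (μ : Measure F) [IsProbabilityMeasure μ]
    (q : F → EuclideanSpace ℝ (Fin d))
    (q' : F → F →L[ℝ] EuclideanSpace ℝ (Fin d))
    (hdiff : ∀ f : F, HasFDerivAt q (q' f) f)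
    (hcont : Continuous q')
    (hsurj : ∀ f : F, Function.Surjective (q' f))
    (hint : Integrable (fun g => ‖q g‖ ^ 2) μ)
    (r : F → ℝ) (hr : ∀ f : F, r f = ∫ g, ‖q f - q g‖ ^ 2 ∂μ)
    (f₀ : F) (hmin : ∀ f : F, r f₀ ≤ r f) :
    r f₀ = (1 / 2) * ∫ p : F × F, ‖q p.1 - q p.2‖ ^ 2 ∂(μ.prod μ) := by
  classical
  have hqc : Continuous q := by
    rw [continuous_iff_continuousAt]
    exact fun f => (hdiff f).continuousAt
  have hq_int : Integrable q μ := by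
    refine Integrable.mono' (hint.add (integrable_const 1))
      hqc.aestronglyMeasurable ?_
    filter_upwards with g
    have : ‖q g‖ ≤ ‖q g‖ ^ 2 + 1 := by nlinarith [norm_nonneg (q g), sq_nonneg (‖q g‖ - 1)]
    simpa using this
  set m : EuclideanSpace ℝ (Fin d) := ∫ g, q g ∂μ with hm
  set C : ℝ := ∫ g, ‖q g‖ ^ 2 ∂μ with hC
  -- expansion of the risk
  have key : ∀ f : F, r f = ‖q f - m‖ ^ 2 + (C - ‖m‖ ^ 2) := by
    intro f
    rw [hr]
    have h1 : ∀ g : F, ‖q f - q g‖ ^ 2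
        = ‖q f‖ ^ 2 - 2 * (inner ℝ (q f) (q g) : ℝ) + ‖q g‖ ^ 2 := fun g =>
      norm_sub_sq_real _ _
    have hi1 : Integrable (fun g => (inner ℝ (q f) (q g) : ℝ)) μ := hq_int.const_inner _
    have hi2 : Integrable (fun g => 2 * (inner ℝ (q f) (q g) : ℝ)) μ := hi1.const_mul 2
    have hi3 : Integrable (fun g : F => ‖q f‖ ^ 2 - 2 * (inner ℝ (q f) (q g) : ℝ)) μ :=
      (integrable_const _).sub hi2
    simp_rw [h1]
    rw [integral_add hi3 hint, integral_sub (integrable_const _) hi2, integral_const,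
      integral_const_mul, integral_inner hq_int, probReal_univ]
    have h2 : ‖q f - m‖ ^ 2 = ‖q f‖ ^ 2 - 2 * (inner ℝ (q f) m : ℝ) + ‖m‖ ^ 2 :=
      norm_sub_sq_real _ _
    simp [h2, ← hm, ← hC]
  -- first-order condition: the minimiser maps to the mean
  have hqm : q f₀ = m := by
    by_contra hne
    have hstrict : HasStrictFDerivAt q (q' f₀) f₀ :=
      hasStrictFDerivAt_of_hasFDerivAt_of_continuousAt
        (Filter.Eventually.of_forall hdiff) hcont.continuousAt
    have hmap : Filter.map q (nhds f₀) = nhds (q f₀) :=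
      hstrict.map_nhds_eq_of_surj (LinearMap.range_eq_top.2 (hsurj f₀))
    have hrng : Set.range q ∈ nhds (q f₀) := by
      rw [← hmap]; exact Filter.range_mem_map
    obtain ⟨ε, εpos, hε⟩ := Metric.mem_nhds_iff.1 hrng
    set D : ℝ := ‖q f₀ - m‖ with hD
    have Dpos : 0 < D := by
      simp only [hD, norm_pos_iff, sub_ne_zero]
      exact hne
    set t : ℝ := min (1 / 2) (ε / (2 * D)) with ht
    have tpos : 0 < t := lt_min (by norm_num) (div_pos εpos (by positivity))
    have tle : t ≤ 1 / 2 := min_le_left _ _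
    set y : EuclideanSpace ℝ (Fin d) := q f₀ + t • (m - q f₀) with hy
    have hyball : y ∈ Metric.ball (q f₀) ε := by
      have hn : ‖y - q f₀‖ = t * D := by
        simp [hy, hD, norm_smul, abs_of_pos tpos, norm_sub_rev m (q f₀)]
      have htD : t * D < ε := by
        have h2 : t ≤ ε / (2 * D) := min_le_right _ _
        have : t * D ≤ ε / 2 := by
          calc t * D ≤ (ε / (2 * D)) * D := by nlinarith
            _ = ε / 2 := by field_simp
        linarith
      simpa [Metric.mem_ball, dist_eq_norm, hn] using htD
    obtain ⟨f₁, hf₁⟩ := hε hyball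
    have hylt : ‖y - m‖ < D := by
      have hym : y - m = (1 - t) • (q f₀ - m) := by
        simp [hy]
        module
      rw [hym, norm_smul, Real.norm_eq_abs, abs_of_pos (by linarith : (0:ℝ) < 1 - t), ← hD]
      nlinarith
    have : r f₁ < r f₀ := by
      rw [key f₁, key f₀, hf₁, ← hD]
      have : ‖y - m‖ ^ 2 < D ^ 2 := by nlinarith [norm_nonneg (y - m)]
      linarith
    exact absurd (hmin f₁) (not_le.2 this)
  have hr0 : r f₀ = C - ‖m‖ ^ 2 := by rw [key, hqm]; simp
  -- the double integral
  have hqmble : Measurable q := hqc.measurable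
  have hmeas2 : AEStronglyMeasurable (fun p : F × F => ‖q p.1 - q p.2‖ ^ 2) (μ.prod μ) :=
    (((hqmble.comp measurable_fst).sub (hqmble.comp measurable_snd)).norm.pow_const
      2).aestronglyMeasurable
  have hpf : MeasurePreserving (Prod.fst : F × F → F) (μ.prod μ) μ :=
    ⟨measurable_fst, by simp⟩
  have hps : MeasurePreserving (Prod.snd : F × F → F) (μ.prod μ) μ :=
    ⟨measurable_snd, by simp⟩
  have h1 : Integrable (fun p : F × F => ‖q p.1‖ ^ 2) (μ.prod μ) :=
    (hpf.integrable_comp (hqc.norm.pow 2).aestronglyMeasurable).2 hint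
  have h2 : Integrable (fun p : F × F => ‖q p.2‖ ^ 2) (μ.prod μ) :=
    (hps.integrable_comp (hqc.norm.pow 2).aestronglyMeasurable).2 hint
  have hint2 : Integrable (fun p : F × F => ‖q p.1 - q p.2‖ ^ 2) (μ.prod μ) := by
    refine Integrable.mono' ((h1.const_mul 2).add (h2.const_mul 2)) hmeas2 ?_
    filter_upwards with p
    have h := norm_sub_le (q p.1) (q p.2)
    have h2' : ‖q p.1 - q p.2‖ ^ 2 ≤ (‖q p.1‖ + ‖q p.2‖) ^ 2 :=
      pow_le_pow_left₀ (norm_nonneg _) h 2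
    have : ‖q p.1 - q p.2‖ ^ 2 ≤ 2 * ‖q p.1‖ ^ 2 + 2 * ‖q p.2‖ ^ 2 := by
      nlinarith [sq_nonneg (‖q p.1‖ - ‖q p.2‖)]
    simpa [abs_of_nonneg (sq_nonneg ‖q p.1 - q p.2‖)] using this
  rw [integral_prod _ hint2]
  have hinner : ∀ g : F, (∫ g', ‖q g - q g'‖ ^ 2 ∂μ) = ‖q g - m‖ ^ 2 + (C - ‖m‖ ^ 2) := by
    intro g
    rw [← hr g, key g]
  simp_rw [hinner]
  have hexp : ∀ g : F, ‖q g - m‖ ^ 2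
      = ‖q g‖ ^ 2 - 2 * (inner ℝ m (q g) : ℝ) + ‖m‖ ^ 2 := by
    intro g
    rw [norm_sub_sq_real, real_inner_comm]
  have hii : Integrable (fun g => 2 * (inner ℝ m (q g) : ℝ)) μ :=
    (hq_int.const_inner m).const_mul 2
  have hiA : Integrable (fun g : F => ‖q g‖ ^ 2 - 2 * (inner ℝ m (q g) : ℝ)) μ :=
    hint.sub hii
  have hsub_int : Integrable (fun g => ‖q g - m‖ ^ 2) μ := by
    simp_rw [hexp]
    exact hiA.add (integrable_const _)
  have hI : (∫ g, ‖q g - m‖ ^ 2 ∂μ) = C - ‖m‖ ^ 2 := by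
    simp_rw [hexp]
    rw [integral_add hiA (integrable_const _), integral_sub hint hii, integral_const_mul,
      integral_inner hq_int, integral_const, probReal_univ]
    simp only [ENNReal.toReal_one, one_smul, smul_eq_mul, one_mul, ← hm,
      real_inner_self_eq_norm_sq]
    ring
  rw [integral_add hsub_int (integrable_const _), hI, integral_const, probReal_univ, hr0]
  simp
  ring
end
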